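/- arXiv:1609.06976 — 7 statements merged into one kernel-verified Lean document; each statement's English description precedes it below -/
import Mathlib

section
/- For every integer n ≥ 1, the n-th Catalan number C_n satisfies n·C_n = Σ_{k=0}^{n-1} (n-k)·(n+k-1 choose k). -/
open Finset

lemma hockey (r : ℕ) : ∀ m : ℕ, ∑ k ∈ range (m+1), (r+k).choose k = (r+m+1).choose m := by
  intro m
  induction m with
  | zero => simp
  | succ m ih =>
    rw [Finset.sum_range_succ, ih]
    have : r + (m+1) + 1 = (r + m + 1) + 1 := by ring
    rw [this, Nat.choose_succ_succ']
    have : r + (m + 1) = r + m + 1 := by ring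
    rw [this]

lemma swapsum (f : ℕ → ℕ) : ∀ n : ℕ,
    ∑ j ∈ range n, ∑ k ∈ range (j+1), f k = ∑ k ∈ range n, (n - k) * f k := by
  intro n
  induction n with
  | zero => simp
  | succ n ih =>
    rw [Finset.sum_range_succ, ih]
    conv_rhs => rw [Finset.sum_range_succ]
    have h1 : ∑ k ∈ range n, (n + 1 - k) * f k
        = ∑ k ∈ range n, ((n - k) * f k + f k) := by
      apply Finset.sum_congr rfl
      intro k hk
      simp only [Finset.mem_range] at hk
      have : n + 1 - k = (n - k) + 1 := by omega
      rw [this]; ring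
    rw [h1, Finset.sum_add_distrib]
    have h2 : n + 1 - n = 1 := by omega
    rw [h2, one_mul]
    rw [Finset.sum_range_succ f n, ← add_assoc]

theorem catalan_identity_s6 (n : ℕ) (hn : 1 ≤ n) :
    n * catalan n
      = ∑ k ∈ Finset.range n, (n - k) * Nat.choose (n + k - 1) k := by
  obtain ⟨m, rfl⟩ : ∃ m, n = m + 1 := ⟨n - 1, by omega⟩
  have key : ∀ j, ∑ k ∈ range (j+1), (m + 1 + k - 1).choose k = (m + 1 + j).choose j := by
    intro j
    have := hockey m j
    simpa [Nat.add_sub_cancel, show ∀ k, m + 1 + k - 1 = m + k by omega, show m + 1 + j = m + j + 1 by ring] using this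
  rw [← swapsum]
  have h2 : ∑ j ∈ range (m+1), ∑ k ∈ range (j+1), (m + 1 + k - 1).choose k
      = ∑ j ∈ range (m+1), (m + 1 + j).choose j := by
    exact Finset.sum_congr rfl fun j _ => key j
  rw [h2]
  have h3 : ∑ j ∈ range (m+1), (m + 1 + j).choose j = (2*(m+1)).choose m := by
    have := hockey (m+1) m
    rw [this]; congr 1; omega
  rw [h3]
  -- now n * catalan n = C(2n, n-1)
  have hc : (m + 2) * catalan (m+1) = Nat.centralBinom (m+1) := succ_mul_catalan_eq_centralBinom (m+1)
  have hcb : Nat.centralBinom (m+1) = (2*(m+1)).choose (m+1) := rfl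
  -- (2n).choose (n-1) * (n+1) = (2n).choose n * n
  have hch : (2*(m+1)).choose (m+1) * (m+1) = (2*(m+1)).choose m * (2*(m+1) - m) := by
    exact Nat.choose_succ_right_eq (2*(m+1)) m ▸ rfl
  have : (m+1) * ((m+2) * catalan (m+1)) = (m+2) * ((2*(m+1)).choose m) := by
    rw [hc, hcb]
    have h4 : 2*(m+1) - m = m + 2 := by omega
    rw [h4] at hch
    rw [mul_comm (m+1), hch, mul_comm]
  have hpos : 0 < m + 2 := by omega
  nlinarith [this]
end

section
/- Let g : ℕ → ℕ → ℕ be defined by g(k,0) = 1 and g(0,r) = 1 for all k, r, and g(k,r) = g(k,r-1) + g(k-1,r) + g(k-1,r-1) for k, r ≥ 1. For n ≥ 1 let K_n be the n×n matrix with (i,j) entry g(i,j) for 0 ≤ i, j ≤ n-1, let P_n be the n×n lower-triangular Pascal matrix with (i,j) entry (i choose j), and let D_n be the diagonal matrix with diagonal entries 1, 2, 2², …, 2^{n-1}. Then K_n = P_n · D_n · P_nᵀ. -/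
open Finset

private def dlf (k r : ℕ) : ℕ := ∑ m ∈ Finset.range (k+1), k.choose m * 2^m * r.choose m

private lemma dlf_eq_big (k r N : ℕ) (h : k + 1 ≤ N) :
    ∑ m ∈ Finset.range N, k.choose m * 2^m * r.choose m = dlf k r := by
  rw [dlf, eq_comm]
  apply Finset.sum_subset
  · intro x hx; simp only [Finset.mem_range] at hx ⊢; omega
  · intro x hx hx'
    simp only [Finset.mem_range] at hx hx'
    rw [Nat.choose_eq_zero_of_lt (by omega)]
    ring

private lemma dlf_k0 (k : ℕ) : dlf k 0 = 1 := by
  rw [dlf, Finset.sum_eq_single 0]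
  · simp
  · intro b _ hb
    rw [Nat.choose_eq_zero_of_lt (show 0 < b by omega)]; ring
  · simp

private lemma dlf_0r (r : ℕ) : dlf 0 r = 1 := by simp [dlf]

private lemma dlf_rec (k r : ℕ) :
    dlf (k+1) (r+1) = dlf (k+1) r + dlf k (r+1) + dlf k r := by
  rw [← dlf_eq_big (k+1) (r+1) (k+2) (by omega), ← dlf_eq_big (k+1) r (k+2) (by omega),
    ← dlf_eq_big k (r+1) (k+2) (by omega), ← dlf_eq_big k r (k+2) (by omega)]
  rw [Finset.sum_range_succ' (fun m => (k+1).choose m * 2^m * (r+1).choose m) (k+1),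
    Finset.sum_range_succ' (fun m => (k+1).choose m * 2^m * r.choose m) (k+1),
    Finset.sum_range_succ' (fun m => k.choose m * 2^m * (r+1).choose m) (k+1),
    Finset.sum_range_succ' (fun m => k.choose m * 2^m * r.choose m) (k+1)]
  set H : ℕ → ℕ := fun m => k.choose m * 2^(m+1) * r.choose m with hH
  have key : ∑ m ∈ Finset.range (k+1),
      ((k+1).choose (m+1) * 2^(m+1) * (r+1).choose (m+1) + H (m+1))
      = ∑ m ∈ Finset.range (k+1),
      (((k+1).choose (m+1) * 2^(m+1) * r.choose (m+1)
        + k.choose (m+1) * 2^(m+1) * (r+1).choose (m+1)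
        + k.choose (m+1) * 2^(m+1) * r.choose (m+1)) + H m) := by
    apply Finset.sum_congr rfl
    intro m _
    simp only [hH, Nat.choose_succ_succ k m, Nat.choose_succ_succ r m]
    ring
  have shift : ∑ m ∈ Finset.range (k+1), H m
      = (∑ m ∈ Finset.range (k+1), H (m+1)) + 2 := by
    rw [Finset.sum_range_succ' H k, Finset.sum_range_succ (fun m => H (m+1)) k]
    have h1 : H (k+1) = 0 := by simp [hH, Nat.choose_succ_self]
    have h2 : H 0 = 2 := by simp [hH]
    omega
  simp only [Finset.sum_add_distrib] at key
  rw [shift] at key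
  simp only [Nat.choose_zero_right, pow_zero, mul_one, one_mul]
  omega

private lemma g_eq_dlf (g : ℕ → ℕ → ℕ)
    (hg0 : ∀ k, g k 0 = 1) (h0g : ∀ r, g 0 r = 1)
    (hrec : ∀ k r, 1 ≤ k → 1 ≤ r →
      g k r = g k (r - 1) + g (k - 1) r + g (k - 1) (r - 1)) :
    ∀ k r, g k r = dlf k r := by
  have H : ∀ s k r, k + r ≤ s → g k r = dlf k r := by
    intro s
    induction s with
    | zero => intro k r h
              have hk : k = 0 := by omega
              have hr : r = 0 := by omega
              subst hk; subst hr; rw [hg0, dlf_k0]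
    | succ s ih =>
      intro k r h
      match k, r with
      | 0, r => rw [h0g, dlf_0r]
      | k+1, 0 => rw [hg0, dlf_k0]
      | k+1, r+1 =>
        rw [hrec (k+1) (r+1) (by omega) (by omega)]
        simp only [Nat.add_sub_cancel]
        rw [ih (k+1) r (by omega), ih k (r+1) (by omega), ih k r (by omega), dlf_rec]
  intro k r; exact H (k+r) k r le_rfl

theorem delannoy_matrix_decomposition
    (g : ℕ → ℕ → ℕ)
    (hg0 : ∀ k, g k 0 = 1)
    (h0g : ∀ r, g 0 r = 1)
    (hrec : ∀ k r, 1 ≤ k → 1 ≤ r →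
      g k r = g k (r - 1) + g (k - 1) r + g (k - 1) (r - 1))
    (n : ℕ) (hn : 1 ≤ n)
    (K P D : Matrix (Fin n) (Fin n) ℕ)
    (hK : ∀ i j : Fin n, K i j = g (i : ℕ) (j : ℕ))
    (hP : ∀ i j : Fin n, P i j = Nat.choose (i : ℕ) (j : ℕ))
    (hD : D = Matrix.diagonal (fun i : Fin n => 2 ^ (i : ℕ))) :
    K = P * D * P.transpose := by
  ext i j
  rw [hK, g_eq_dlf g hg0 h0g hrec]
  rw [Matrix.mul_apply]
  simp only [Matrix.mul_apply, hD, Matrix.transpose_apply, hP,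
    Matrix.diagonal_apply]
  have : ∀ m : Fin n, (∑ x : Fin n,
      (i:ℕ).choose (x:ℕ) * (if x = m then 2 ^ (x:ℕ) else 0)) * (j:ℕ).choose (m:ℕ)
      = (i:ℕ).choose (m:ℕ) * 2^(m:ℕ) * (j:ℕ).choose (m:ℕ) := by
    intro m
    congr 1
    rw [Finset.sum_eq_single m]
    · simp
    · intro b _ hb; simp [hb]
    · simp
  rw [Finset.sum_congr rfl (fun m _ => this m)]
  rw [← dlf_eq_big (i:ℕ) (j:ℕ) n (by omega)]
  rw [← Fin.sum_univ_eq_sum_range (fun m => (i:ℕ).choose m * 2^m * (j:ℕ).choose m) n]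
end

section
/- Let g : ℕ → ℕ → ℕ satisfy g(k,0) = g(0,r) = 1 and g(k,r) = g(k,r-1) + g(k-1,r) + g(k-1,r-1) for k, r ≥ 1, and let R(p,q), defined for 0 ≤ q ≤ p, satisfy R(p,0) = 1, R(p,q) = R(p-1,q) + R(p,q-1) + R(p-1,q-1) for 1 ≤ q < p, and R(n,n) = R(n,n-1) + R(n-1,n-1) for n ≥ 1. Then for all 1 ≤ q ≤ p, R(p,q) = g(p,q) − g(p+1,q-1). -/
theorem subdiagonal_hvd_eq_delannoy_diff
    (g : ℕ → ℕ → ℕ)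
    (hg0 : ∀ k, g k 0 = 1)
    (h0g : ∀ r, g 0 r = 1)
    (hgrec : ∀ k r, 1 ≤ k → 1 ≤ r →
      g k r = g k (r - 1) + g (k - 1) r + g (k - 1) (r - 1))
    (R : ℕ → ℕ → ℕ)
    (hR0 : ∀ p, R p 0 = 1)
    (hRrec : ∀ p q, 1 ≤ q → q < p →
      R p q = R (p - 1) q + R p (q - 1) + R (p - 1) (q - 1))
    (hRdiag : ∀ n, 1 ≤ n → R n n = R n (n - 1) + R (n - 1) (n - 1)) :
    ∀ p q, 1 ≤ q → q ≤ p →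
      (R p q : ℤ) = (g p q : ℤ) - (g (p + 1) (q - 1) : ℤ) := by
  -- symmetry of g
  have hsymm : ∀ n k r, k + r ≤ n → g k r = g r k := by
    intro n
    induction n with
    | zero =>
      intro k r h
      have hk : k = 0 := by omega
      have hr : r = 0 := by omega
      rw [hk, hr]
    | succ n ih =>
      intro k r h
      rcases Nat.eq_zero_or_pos k with hk | hk
      · rw [hk, h0g, hg0]
      rcases Nat.eq_zero_or_pos r with hr | hr
      · rw [hr, h0g, hg0]
      have h1 := ih k (r - 1) (by omega)
      have h2 := ih (k - 1) r (by omega)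
      have h3 := ih (k - 1) (r - 1) (by omega)
      rw [hgrec k r hk hr, hgrec r k hr hk]
      omega
  have main : ∀ n p q, p + q ≤ n → 1 ≤ q → q ≤ p →
      (R p q : ℤ) = (g p q : ℤ) - (g (p + 1) (q - 1) : ℤ) := by
    intro n
    induction n with
    | zero => intro p q hn hq hqp; omega
    | succ n ih =>
      intro p q hn hq hqp
      rcases eq_or_lt_of_le hq with hq1 | hq2
      · -- q = 1
        rw [← hq1]
        simp only [Nat.sub_self]
        rcases eq_or_lt_of_le (hq1 ▸ hqp) with hp1 | hp2
        · -- p = 1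
          rw [← hp1]
          have hd := hRdiag 1 le_rfl
          have hg := hgrec 1 1 le_rfl le_rfl
          simp only [Nat.sub_self] at hd hg
          have e1 := hR0 1
          have e2 := hR0 0
          have e3 := hg0 1
          have e4 := hg0 0
          have e5 := h0g 1
          have e6 := hg0 (1+1)
          omega
        · -- p ≥ 2
          have hr := hRrec p 1 le_rfl (by omega)
          simp only [Nat.sub_self] at hr
          have hih := ih (p - 1) 1 (by omega) le_rfl (by omega)
          simp only [Nat.sub_self] at hih
          have hg := hgrec p 1 (by omega) le_rfl
          simp only [Nat.sub_self] at hg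
          have e1 := hR0 p
          have e2 := hR0 (p - 1)
          have e3 := hg0 p
          have e4 := hg0 (p - 1)
          have e5 := hg0 ((p - 1) + 1)
          have e6 := hg0 (p + 1)
          have e7 : (p - 1) + 1 = p := by omega
          rw [e7] at hih
          omega
      · -- q ≥ 2
        rcases eq_or_lt_of_le hqp with hqp1 | hqp2
        · -- q = p (diagonal)
          subst hqp1
          have hd := hRdiag q (by omega)
          have i1 := ih q (q - 1) (by omega) (by omega) (by omega)
          have i2 := ih (q - 1) (q - 1) (by omega) (by omega) le_rfl
          have hg1 := hgrec q q (by omega) (by omega)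
          have hg2 := hgrec (q + 1) (q - 1) (by omega) (by omega)
          have hs := hsymm (q + q) (q - 1) q (by omega)
          have e1 : q - 1 - 1 = q - 2 := by omega
          have e2 : q + 1 - 1 = q := by omega
          have e3 : q - 1 + 1 = q := by omega
          rw [e1] at i1 i2 hg2
          rw [e2] at hg2
          rw [e3] at i2
          omega
        · -- q < p
          have hr := hRrec p q hq hqp2
          have i1 := ih (p - 1) q (by omega) hq (by omega)
          have i2 := ih p (q - 1) (by omega) (by omega) (by omega)
          have i3 := ih (p - 1) (q - 1) (by omega) (by omega) (by omega)
          have hg1 := hgrec p q (by omega) (by omega)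
          have hg2 := hgrec (p + 1) (q - 1) (by omega) (by omega)
          have e1 : q - 1 - 1 = q - 2 := by omega
          have e2 : p + 1 - 1 = p := by omega
          have e3 : p - 1 + 1 = p := by omega
          rw [e1] at i2 i3 hg2
          rw [e2] at hg2
          rw [e3] at i1 i3
          omega
  intro p q hq hqp
  exact main (p + q) p q le_rfl hq hqp
end

section
/- Let R(p,q), defined for 0 ≤ q ≤ p, satisfy R(p,0) = 1, R(p,q) = R(p-1,q) + R(p,q-1) + R(p-1,q-1) for 1 ≤ q < p, and R(n,n) = R(n,n-1) + R(n-1,n-1) for n ≥ 1. Then for all 0 ≤ q ≤ p, viewing all terms as rational numbers, R(p,q) = Σ_{r=0}^{q} ((p-q+1)/(p-r+1)) · (p+q-r)! / ((p-r)!·(q-r)!·r!). -/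
/-!
Deleting the diagonal steps of a subdiagonal HVD path to `(p, q)` with `r` diagonal steps leaves
a subdiagonal path to `(p - r, q - r)` with unit horizontal and vertical steps, and every such
path arises from `(p + q - r).choose r` interleavings. Those paths to `(a, b)` are counted by the
ballot number `(a + 1 - b) / (a + 1) * (a + b).choose b`, so the summand is
`(p + q - r).choose r * ballot (p - r) (q - r)`. Pascal's rule together with the ballot
recurrence shows that the sum satisfies the recurrences defining `R`, which determine `R`.
The diagonal recurrence is the general one because the summand vanishes at `q = p + 1`.
-/

open Nat Finset

def ballot (a b : ℕ) : ℚ := ((a : ℚ) + 1 - b) / (a + 1) * (a + b).choose b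

theorem ballot_zero_right (a : ℕ) : ballot a 0 = 1 := by
  have : (a : ℚ) + 1 ≠ 0 := by positivity
  simp [ballot, this]

theorem ballot_succ_succ (a b : ℕ) :
    ballot (a + 1) (b + 1) = ballot a (b + 1) + ballot (a + 1) b := by
  have hpascal := Nat.choose_succ_succ' (a + b + 1) b
  have hratio := Nat.choose_succ_right_eq (a + b + 1) b
  rw [show a + b + 1 - b = a + 1 by omega] at hratio
  simp only [ballot, show a + 1 + (b + 1) = a + b + 1 + 1 by ring,
    show a + (b + 1) = a + b + 1 by ring, show a + 1 + b = a + b + 1 by ring, hpascal]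
  have : ((a + b + 1).choose (b + 1) : ℚ) * (b + 1) = (a + b + 1).choose b * (a + 1) := by
    exact_mod_cast hratio
  field_simp
  push_cast
  linear_combination this

def hvdTerm (p q r : ℕ) : ℚ :=
  (((p : ℚ) - q + 1) / ((p : ℚ) - r + 1)) * (p + q - r)! / ((p - r)! * (q - r)! * r !)

theorem hvdTerm_add_add (a b r : ℕ) :
    hvdTerm (a + r) (b + r) r = (a + b + r).choose r * ballot a b := by
  have hfac := Nat.add_choose_mul_factorial_mul_factorial (a + b) r
  have hfac' := Nat.add_choose_mul_factorial_mul_factorial a b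
  unfold hvdTerm ballot
  rw [show a + r + (b + r) - r = a + b + r by omega, Nat.add_sub_cancel, Nat.add_sub_cancel,
    ← hfac, ← hfac']
  have : (a : ℚ) + 1 ≠ 0 := by positivity
  push_cast
  field_simp
  ring

theorem hvdTerm_of_eq {p q r a b n : ℕ} (hp : a + r = p) (hq : b + r = q) (hn : a + b + r = n) :
    hvdTerm p q r = n.choose r * ballot a b := by
  subst hp hq hn
  exact hvdTerm_add_add a b r

theorem hvdTerm_zero_right (p q : ℕ) : hvdTerm p q 0 = ballot p q := by
  simpa using hvdTerm_add_add p q 0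

theorem hvdTerm_self_succ (p r : ℕ) : hvdTerm p (p + 1) r = 0 := by
  simp [hvdTerm]

theorem hvdTerm_diag {p q : ℕ} (h : q ≤ p + 1) : hvdTerm p q q = p.choose q := by
  rcases h.eq_or_lt with rfl | h
  · rw [hvdTerm_self_succ, Nat.choose_succ_self, Nat.cast_zero]
  · have : hvdTerm p q q = p.choose q * ballot (p - q) 0 :=
      hvdTerm_of_eq (by omega) (zero_add q) (by omega)
    rw [this, ballot_zero_right, mul_one]

theorem hvdTerm_succ_succ_succ {p q r : ℕ} (hq : r < q) (hp : r < p) :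
    hvdTerm (p + 1) (q + 1) (r + 1) =
      hvdTerm p (q + 1) (r + 1) + hvdTerm (p + 1) q (r + 1) + hvdTerm p q r := by
  obtain ⟨a, rfl⟩ : ∃ a, p = a + 1 + r := ⟨p - r - 1, by omega⟩
  obtain ⟨b, rfl⟩ : ∃ b, q = b + 1 + r := ⟨q - r - 1, by omega⟩
  have e₁ : hvdTerm (a + 1 + r + 1) (b + 1 + r + 1) (r + 1) =
      (a + b + r + 2 + 1).choose (r + 1) * ballot (a + 1) (b + 1) := hvdTerm_of_eq rfl rfl (by omega)
  have e₂ : hvdTerm (a + 1 + r) (b + 1 + r + 1) (r + 1) =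
      (a + b + r + 2).choose (r + 1) * ballot a (b + 1) := hvdTerm_of_eq (by omega) rfl (by omega)
  have e₃ : hvdTerm (a + 1 + r + 1) (b + 1 + r) (r + 1) =
      (a + b + r + 2).choose (r + 1) * ballot (a + 1) b := hvdTerm_of_eq rfl (by omega) (by omega)
  have e₄ : hvdTerm (a + 1 + r) (b + 1 + r) r =
      (a + b + r + 2).choose r * ballot (a + 1) (b + 1) := hvdTerm_of_eq rfl rfl (by omega)
  rw [e₁, e₂, e₃, e₄, ballot_succ_succ, Nat.choose_succ_succ']
  push_cast
  ring

def hvdSum (p q : ℕ) : ℚ := ∑ r ∈ range (q + 1), hvdTerm p q r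

theorem hvdSum_zero_right (p : ℕ) : hvdSum p 0 = 1 := by
  simp [hvdSum, hvdTerm_zero_right, ballot_zero_right]

theorem hvdSum_self_succ (p : ℕ) : hvdSum p (p + 1) = 0 := by
  simp [hvdSum, hvdTerm_self_succ]

theorem hvdSum_succ_succ {p q : ℕ} (h : q ≤ p) :
    hvdSum (p + 1) (q + 1) = hvdSum p (q + 1) + hvdSum (p + 1) q + hvdSum p q := by
  have interior : ∑ r ∈ range q, hvdTerm (p + 1) (q + 1) (r + 1) =
      ∑ r ∈ range q, (hvdTerm p (q + 1) (r + 1) + hvdTerm (p + 1) q (r + 1) + hvdTerm p q r) :=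
    sum_congr rfl fun r hr => hvdTerm_succ_succ_succ (mem_range.1 hr) (by grind)
  have bottom : hvdTerm (p + 1) (q + 1) 0 = hvdTerm p (q + 1) 0 + hvdTerm (p + 1) q 0 := by
    simp only [hvdTerm_zero_right, ballot_succ_succ]
  have top : hvdTerm (p + 1) (q + 1) (q + 1) = hvdTerm p (q + 1) (q + 1) + hvdTerm p q q := by
    rw [hvdTerm_diag (by omega), hvdTerm_diag (by omega), hvdTerm_diag (by omega),
      Nat.choose_succ_succ', Nat.cast_add, add_comm]
  have peel₂ (f : ℕ → ℚ) :
      ∑ r ∈ range (q + 1 + 1), f r = f 0 + ∑ r ∈ range q, f (r + 1) + f (q + 1) := by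
    rw [sum_range_succ', sum_range_succ]; ring
  have peel₁ (f : ℕ → ℚ) : ∑ r ∈ range (q + 1), f r = f 0 + ∑ r ∈ range q, f (r + 1) := by
    rw [sum_range_succ', add_comm]
  simp only [hvdSum]
  rw [peel₂, peel₂, peel₁, sum_range_succ (hvdTerm p q), interior, bottom, top, sum_add_distrib,
    sum_add_distrib]
  ring

def IsHVDRecurrence {α : Type*} [Add α] (f : ℕ → ℕ → α) : Prop :=
  (∀ p q, q < p → f (p + 1) (q + 1) = f p (q + 1) + f (p + 1) q + f p q) ∧
    ∀ n, f (n + 1) (n + 1) = f (n + 1) n + f n n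

theorem IsHVDRecurrence.eq {α : Type*} [Add α] {f g : ℕ → ℕ → α} (hf : IsHVDRecurrence f)
    (hg : IsHVDRecurrence g) (h₀ : ∀ p, f p 0 = g p 0) : ∀ p q, q ≤ p → f p q = g p q := by
  intro p
  induction p with
  | zero =>
    intro q hq
    obtain rfl : q = 0 := by omega
    exact h₀ 0
  | succ p ihp =>
    intro q
    induction q with
    | zero => exact fun _ => h₀ _
    | succ q ihq =>
      intro hq
      rcases (show q < p ∨ q = p by omega) with hlt | rfl
      · rw [hf.1 p q hlt, hg.1 p q hlt, ihp (q + 1) hlt, ihq (by omega), ihp q hlt.le]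
      · rw [hf.2, hg.2, ihq (by omega), ihp q le_rfl]

theorem isHVDRecurrence_hvdSum : IsHVDRecurrence hvdSum :=
  ⟨fun _ _ h => hvdSum_succ_succ h.le, fun n => by
    rw [hvdSum_succ_succ le_rfl, hvdSum_self_succ, zero_add]⟩

theorem subdiagonal_hvd_formula
    (R : ℕ → ℕ → ℕ)
    (hR0 : ∀ p, R p 0 = 1)
    (hRrec : ∀ p q, 1 ≤ q → q < p →
      R p q = R (p - 1) q + R p (q - 1) + R (p - 1) (q - 1))
    (hRdiag : ∀ n, 1 ≤ n → R n n = R n (n - 1) + R (n - 1) (n - 1)) :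
    ∀ p q, q ≤ p →
      (R p q : ℚ) = ∑ r ∈ Finset.range (q + 1),
        (((p : ℚ) - q + 1) / ((p : ℚ) - r + 1))
          * (Nat.factorial (p + q - r) : ℚ)
          / ((Nat.factorial (p - r) : ℚ) * (Nat.factorial (q - r) : ℚ)
              * (Nat.factorial r : ℚ)) := by
  have hR : IsHVDRecurrence fun p q => (R p q : ℚ) := by
    refine ⟨fun p q h => ?_, fun n => ?_⟩
    · have := hRrec (p + 1) (q + 1) (by omega) (by omega)
      simp only [Nat.add_sub_cancel] at this
      dsimp only
      exact_mod_cast this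
    · have := hRdiag (n + 1) (by omega)
      simp only [Nat.add_sub_cancel] at this
      dsimp only
      exact_mod_cast this
  refine hR.eq (g := hvdSum) isHVDRecurrence_hvdSum fun p => ?_
  rw [hR0, Nat.cast_one, hvdSum_zero_right]
end

section
/- Let R(p,q), defined for 0 ≤ q ≤ p, satisfy R(p,0) = 1, R(p,q) = R(p-1,q) + R(p,q-1) + R(p-1,q-1) for 1 ≤ q < p, and R(n,n) = R(n,n-1) + R(n-1,n-1) for n ≥ 1, and let the large Schröder number be S_n = R(n,n). Then for all n ≥ 0, viewing all terms as rational numbers, S_n = Σ_{r=0}^{n} (1/(n-r+1)) · (2n-r)! / ((n-r)!·(n-r)!·r!). -/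
open Finset

def Bq (a b : ℕ) : ℚ := (Nat.choose (a + b) b : ℚ) - (Nat.choose (a + b) (a + 1) : ℚ)

lemma Bq_zero (a : ℕ) : Bq a 0 = 1 := by
  simp [Bq, Nat.choose_eq_zero_of_lt (by omega : a < a + 1)]

lemma Bq_above (a : ℕ) : Bq a (a + 1) = 0 := by
  simp [Bq]

lemma Bq_pascal (a b : ℕ) : Bq (a + 1) (b + 1) = Bq a (b + 1) + Bq (a + 1) b := by
  unfold Bq
  have h1 : (a + 1) + (b + 1) = (a + (b + 1)) + 1 := by ring
  have h2 : a + (b + 1) = (a + 1) + b := by ring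
  rw [h1, Nat.choose_succ_succ, Nat.choose_succ_succ]
  push_cast
  rw [h2]
  ring

def Fq (p q : ℕ) : ℚ :=
  ∑ r ∈ range (q + 1), (Nat.choose (p + q - r) r : ℚ) * Bq (p - r) (q - r)

lemma Fq_zero (p : ℕ) : Fq p 0 = 1 := by
  simp [Fq, Bq_zero]

lemma Fq_above (p : ℕ) : Fq p (p + 1) = 0 := by
  unfold Fq
  apply Finset.sum_eq_zero
  intro r hr
  simp only [mem_range] at hr
  rcases le_or_gt r p with h | h
  · have : p + 1 - r = (p - r) + 1 := by omega
    rw [this, Bq_above, mul_zero]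
  · have hr' : r = p + 1 := by omega
    subst hr'
    rw [Nat.choose_eq_zero_of_lt (by omega)]
    simp

lemma Fq_rec (p q : ℕ) (h : q ≤ p) :
    Fq (p + 1) (q + 1) = Fq p (q + 1) + Fq (p + 1) q + Fq p q := by
  have h1 : Fq (p + 1) (q + 1) =
      (∑ i ∈ range (q + 1), (Nat.choose (p + q + 1 - i) (i + 1) : ℚ) *
        Bq (p - i) (q - i)) + Bq (p + 1) (q + 1) := by
    unfold Fq
    rw [Finset.sum_range_succ']
    simp only [Nat.choose_zero_right, Nat.cast_one, one_mul, Nat.sub_zero]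
    congr 1
    refine Finset.sum_congr rfl fun i hi => ?_
    have e1 : p + 1 + (q + 1) - (i + 1) = p + q + 1 - i := by omega
    have e2 : p + 1 - (i + 1) = p - i := by omega
    have e3 : q + 1 - (i + 1) = q - i := by omega
    rw [e1, e2, e3]
  have h2 : Fq p (q + 1) =
      (∑ i ∈ range (q + 1), (Nat.choose (p + q - i) (i + 1) : ℚ) *
        Bq (p - 1 - i) (q - i)) + Bq p (q + 1) := by
    unfold Fq
    rw [Finset.sum_range_succ']
    simp only [Nat.choose_zero_right, Nat.cast_one, one_mul, Nat.sub_zero]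
    congr 1
    refine Finset.sum_congr rfl fun i hi => ?_
    have e1 : p + (q + 1) - (i + 1) = p + q - i := by omega
    have e2 : p - (i + 1) = p - 1 - i := by omega
    have e3 : q + 1 - (i + 1) = q - i := by omega
    rw [e1, e2, e3]
  have h3 : Fq (p + 1) q =
      (∑ i ∈ range q, (Nat.choose (p + q - i) (i + 1) : ℚ) *
        Bq (p - i) (q - 1 - i)) + Bq (p + 1) q := by
    unfold Fq
    rw [Finset.sum_range_succ']
    simp only [Nat.choose_zero_right, Nat.cast_one, one_mul, Nat.sub_zero]
    congr 1
    refine Finset.sum_congr rfl fun i hi => ?_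
    have e1 : p + 1 + q - (i + 1) = p + q - i := by omega
    have e2 : p + 1 - (i + 1) = p - i := by omega
    have e3 : q - (i + 1) = q - 1 - i := by omega
    rw [e1, e2, e3]
  have h4 : ∑ i ∈ range (q + 1), (Nat.choose (p + q + 1 - i) (i + 1) : ℚ) *
        Bq (p - i) (q - i) =
      (∑ i ∈ range (q + 1), (Nat.choose (p + q - i) (i + 1) : ℚ) * Bq (p - i) (q - i)) +
      Fq p q := by
    unfold Fq
    rw [← Finset.sum_add_distrib]
    refine Finset.sum_congr rfl fun i hi => ?_
    simp only [mem_range] at hi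
    have e1 : p + q + 1 - i = (p + q - i) + 1 := by omega
    rw [e1, Nat.choose_succ_succ']
    push_cast
    ring
  have h6 : ∑ i ∈ range (q + 1), (Nat.choose (p + q - i) (i + 1) : ℚ) *
        Bq (p - i) (q - i) =
      (∑ i ∈ range (q + 1), (Nat.choose (p + q - i) (i + 1) : ℚ) *
        Bq (p - 1 - i) (q - i)) +
      ∑ i ∈ range q, (Nat.choose (p + q - i) (i + 1) : ℚ) * Bq (p - i) (q - 1 - i) := by
    rw [Finset.sum_range_succ, Finset.sum_range_succ
      (fun i => (Nat.choose (p + q - i) (i + 1) : ℚ) * Bq (p - 1 - i) (q - i)) q]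
    have elast : (Nat.choose (p + q - q) (q + 1) : ℚ) * Bq (p - q) (q - q) =
        (Nat.choose (p + q - q) (q + 1) : ℚ) * Bq (p - 1 - q) (q - q) := by
      have : q - q = 0 := by omega
      rw [this, Bq_zero, Bq_zero]
    rw [elast]
    have hsum : ∑ i ∈ range q, (Nat.choose (p + q - i) (i + 1) : ℚ) *
          Bq (p - i) (q - i) =
        ∑ i ∈ range q, ((Nat.choose (p + q - i) (i + 1) : ℚ) * Bq (p - 1 - i) (q - i) +
          (Nat.choose (p + q - i) (i + 1) : ℚ) * Bq (p - i) (q - 1 - i)) := by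
      refine Finset.sum_congr rfl fun i hi => ?_
      simp only [mem_range] at hi
      have e2 : p - i = (p - 1 - i) + 1 := by omega
      have e3 : q - i = (q - 1 - i) + 1 := by omega
      rw [e2, e3, Bq_pascal]
      have e2' : p - 1 - i + 1 = p - i := by omega
      have e3' : q - 1 - i + 1 = q - i := by omega
      rw [e2', e3']
      ring
    rw [hsum, Finset.sum_add_distrib]
    ring
  have h0 : Bq (p + 1) (q + 1) = Bq p (q + 1) + Bq (p + 1) q := Bq_pascal p q
  rw [h1, h2, h3, h4] at *
  linarith [h6, h0]

lemma key (R : ℕ → ℕ → ℕ)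
    (hR0 : ∀ p, R p 0 = 1)
    (hRrec : ∀ p q, 1 ≤ q → q < p →
      R p q = R (p - 1) q + R p (q - 1) + R (p - 1) (q - 1))
    (hRdiag : ∀ n, 1 ≤ n → R n n = R n (n - 1) + R (n - 1) (n - 1)) :
    ∀ N p q, p + q ≤ N → q ≤ p → (R p q : ℚ) = Fq p q := by
  intro N
  induction N with
  | zero =>
    intro p q hpq hq
    have hp : p = 0 := by omega
    have hq0 : q = 0 := by omega
    subst hp; subst hq0
    rw [hR0, Fq_zero]; norm_num
  | succ N ih =>
    intro p q hpq hq
    rcases Nat.eq_zero_or_pos q with hq0 | hq1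
    · subst hq0; rw [hR0, Fq_zero]; norm_num
    rcases lt_or_eq_of_le hq with hlt | heq
    · -- 1 ≤ q < p
      rw [hRrec p q hq1 hlt]
      push_cast
      rw [ih (p - 1) q (by omega) (by omega), ih p (q - 1) (by omega) (by omega),
        ih (p - 1) (q - 1) (by omega) (by omega)]
      have e : p = (p - 1) + 1 ∧ q = (q - 1) + 1 := by omega
      obtain ⟨e1, e2⟩ := e
      rw [e1, e2] at *
      have := Fq_rec (p - 1) (q - 1) (by omega)
      rw [Nat.add_sub_cancel, Nat.add_sub_cancel] at *
      linarith [this]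
    · -- q = p, diagonal
      subst heq
      rw [hRdiag q hq1]
      push_cast
      rw [ih q (q - 1) (by omega) (by omega), ih (q - 1) (q - 1) (by omega) (by omega)]
      have e1 : q = (q - 1) + 1 := by omega
      have hrec := Fq_rec (q - 1) (q - 1) (le_refl _)
      have habove := Fq_above (q - 1)
      rw [← e1] at hrec habove
      rw [hrec, habove]
      have : q - 1 + 1 = q := by omega
      rw [this] at *
      linarith

theorem schroder_number_formula
    (R : ℕ → ℕ → ℕ)
    (hR0 : ∀ p, R p 0 = 1)
    (hRrec : ∀ p q, 1 ≤ q → q < p →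
      R p q = R (p - 1) q + R p (q - 1) + R (p - 1) (q - 1))
    (hRdiag : ∀ n, 1 ≤ n → R n n = R n (n - 1) + R (n - 1) (n - 1))
    (S : ℕ → ℕ) (hS : ∀ n, S n = R n n) :
    ∀ n : ℕ,
      (S n : ℚ) = ∑ r ∈ Finset.range (n + 1),
        (1 / ((n : ℚ) - r + 1))
          * (Nat.factorial (2 * n - r) : ℚ)
          / ((Nat.factorial (n - r) : ℚ) * (Nat.factorial (n - r) : ℚ)
              * (Nat.factorial r : ℚ)) := by
  intro n
  rw [hS, key R hR0 hRrec hRdiag (n + n) n n le_rfl le_rfl]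
  unfold Fq
  refine Finset.sum_congr rfl fun r hr => ?_
  simp only [Finset.mem_range] at hr
  have hrn : r ≤ n := by omega
  set m := n - r with hm
  -- Bq m m = C(2m, m) / (m + 1)
  have hBq : Bq m m = (Nat.choose (2 * m) m : ℚ) / (m + 1) := by
    have hsy : Nat.choose (2 * m) (m + 1) * (m + 1) = Nat.choose (2 * m) m * m := by
      have := Nat.choose_succ_right_eq (2 * m) m
      have e : 2 * m - m = m := by omega
      rw [e] at this
      exact this
    have hsy' : (Nat.choose (2 * m) (m + 1) : ℚ) * (m + 1) =
        (Nat.choose (2 * m) m : ℚ) * m := by exact_mod_cast hsy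
    have hm1 : ((m : ℚ) + 1) ≠ 0 := by positivity
    unfold Bq
    have e : m + m = 2 * m := by omega
    rw [e]
    field_simp
    linarith [hsy']
  have e1 : n + n - r = 2 * n - r := by omega
  rw [e1, hBq]
  have hc1 : (Nat.choose (2 * n - r) r : ℚ) =
      (Nat.factorial (2 * n - r) : ℚ) /
        ((Nat.factorial r : ℚ) * (Nat.factorial (2 * n - r - r) : ℚ)) :=
    Nat.cast_choose ℚ (by omega)
  have hc2 : (Nat.choose (2 * m) m : ℚ) =
      (Nat.factorial (2 * m) : ℚ) /
        ((Nat.factorial m : ℚ) * (Nat.factorial (2 * m - m) : ℚ)) :=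
    Nat.cast_choose ℚ (by omega)
  have e3 : 2 * n - r - r = 2 * m := by omega
  have e4 : 2 * m - m = m := by omega
  rw [hc1, hc2, e3, e4]
  have hcast : ((n : ℚ) - r + 1) = (m : ℚ) + 1 := by
    have : (m : ℚ) = (n : ℚ) - r := by
      rw [hm]; push_cast [Nat.cast_sub hrn]; ring
    rw [this]
  rw [hcast]
  have f1 : (Nat.factorial r : ℚ) ≠ 0 := by positivity
  have f2 : (Nat.factorial m : ℚ) ≠ 0 := by positivity
  have f3 : (Nat.factorial (2 * m) : ℚ) ≠ 0 := by positivity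
  have f4 : ((m : ℚ) + 1) ≠ 0 := by positivity
  field_simp
end

section
/- Let R(p,q), defined for 0 ≤ q ≤ p, satisfy R(p,0) = 1, R(p,q) = R(p-1,q) + R(p,q-1) + R(p-1,q-1) for 1 ≤ q < p, and R(n,n) = R(n,n-1) + R(n-1,n-1) for n ≥ 1. Then for every n ≥ 1, R(n,n) = 2·Σ_{k=0}^{n-1} R(n-1,k). -/
theorem subdiagonal_hvd_diag_sum
    (R : ℕ → ℕ → ℕ)
    (hR0 : ∀ p, R p 0 = 1)
    (hRrec : ∀ p q, 1 ≤ q → q < p →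
      R p q = R (p - 1) q + R p (q - 1) + R (p - 1) (q - 1))
    (hRdiag : ∀ n, 1 ≤ n → R n n = R n (n - 1) + R (n - 1) (n - 1)) :
    ∀ n, 1 ≤ n → R n n = 2 * ∑ k ∈ Finset.range n, R (n - 1) k := by
  have aux : ∀ q p, q < p → R p q =
      (∑ k ∈ Finset.range (q + 1), R (p - 1) k) + ∑ k ∈ Finset.range q, R (p - 1) k := by
    intro q
    induction q with
    | zero => intro p hp; simp [hR0]
    | succ q ih =>
      intro p hp
      have h1 : R p (q + 1) = R (p - 1) (q + 1) + R p q + R (p - 1) q := by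
        have := hRrec p (q + 1) (Nat.le_add_left 1 q) hp
        simpa using this
      have h2 := ih p (Nat.lt_of_succ_lt hp)
      rw [h1, h2]
      simp [Finset.sum_range_succ]
      omega
  intro n hn
  have hlt : n - 1 < n := Nat.sub_lt hn one_pos
  have h3 := aux (n - 1) n hlt
  have h4 : n - 1 + 1 = n := Nat.succ_pred_eq_of_pos hn
  rw [h4] at h3
  rw [hRdiag n hn, h3]
  have h5 : (∑ k ∈ Finset.range (n - 1), R (n - 1) k) + R (n - 1) (n - 1)
      = ∑ k ∈ Finset.range n, R (n - 1) k := by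
    rw [← Finset.sum_range_succ, h4]
  omega
end

section
/- Let R(p,q), defined for 0 ≤ q ≤ p, satisfy R(p,0) = 1, R(p,q) = R(p-1,q) + R(p,q-1) + R(p-1,q-1) for 1 ≤ q < p, and R(n,n) = R(n,n-1) + R(n-1,n-1) for n ≥ 1, and let the large Schröder number be S_n = R(n,n). Then for all n ≥ 1, S_n = S_{n-1} + Σ_{k=0}^{n-1} S_k · S_{n-1-k}. -/
theorem schroder_convolution
    (R : ℕ → ℕ → ℕ)
    (hR0 : ∀ p, R p 0 = 1)
    (hRrec : ∀ p q, 1 ≤ q → q < p →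
      R p q = R (p - 1) q + R p (q - 1) + R (p - 1) (q - 1))
    (hRdiag : ∀ n, 1 ≤ n → R n n = R n (n - 1) + R (n - 1) (n - 1))
    (S : ℕ → ℕ) (hS : ∀ n, S n = R n n) :
    ∀ n, 1 ≤ n →
      S n = S (n - 1) + ∑ k ∈ Finset.range n, S k * S (n - 1 - k) := by
  -- addition-form versions of the recurrences
  have hrec' : ∀ a b, R (a + b + 2) (a + 1) =
      R (a + b + 1) (a + 1) + R (a + b + 2) a + R (a + b + 1) a := by
    intro a b
    have h := hRrec (a + b + 2) (a + 1) (by omega) (by omega)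
    have e1 : a + b + 2 - 1 = a + b + 1 := by omega
    have e2 : a + 1 - 1 = a := by omega
    rw [e1, e2] at h
    exact h
  have hdiag' : ∀ a, R (a + 1) (a + 1) = R (a + 1) a + R a a := by
    intro a
    have h := hRdiag (a + 1) (by omega)
    have e2 : a + 1 - 1 = a := by omega
    rw [e2] at h
    exact h
  -- Key lemma: convolution decomposition along the last diagonal touch
  have key : ∀ n q d, 2 * q + d ≤ n →
      R (q + d + 1) q = ∑ k ∈ Finset.range (q + 1), R k k * R (q - k + d) (q - k) := by
    intro n
    induction n with
    | zero =>
      intro q d h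
      have hq : q = 0 := by omega
      have hd : d = 0 := by omega
      subst hq; subst hd
      simp [hR0]
    | succ n IH =>
      intro q d h
      rcases q with _ | m
      · simp [hR0]
      · rcases d with _ | e
        · -- d = 0, q = m + 1
          have hA := hrec' m 0
          simp only [Nat.add_zero] at hA ⊢
          have hB := IH m 1 (by omega)
          have hC := IH m 0 (by omega)
          simp only [Nat.add_zero] at hC
          have hsum : ∑ k ∈ Finset.range (m + 1), R k k * R (m + 1 - k) (m + 1 - k)
              = (∑ k ∈ Finset.range (m + 1), R k k * R (m - k + 1) (m - k))
              + ∑ k ∈ Finset.range (m + 1), R k k * R (m - k) (m - k) := by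
            rw [← Finset.sum_add_distrib]
            refine Finset.sum_congr rfl ?_
            intro k hk
            simp only [Finset.mem_range] at hk
            have h1 : m + 1 - k = m - k + 1 := by omega
            rw [h1, hdiag' (m - k), mul_add]
          rw [Finset.sum_range_succ, hsum]
          have h2 : m + 1 - (m + 1) = 0 := by omega
          rw [h2, hR0, hA, ← hB, ← hC]
          ring
        · -- d = e + 1, q = m + 1
          have hA := hrec' m (e + 1)
          have hB := IH (m + 1) e (by omega)
          have hC := IH m (e + 2) (by omega)
          have hD := IH m (e + 1) (by omega)
          have eL : m + 1 + (e + 1) + 1 = m + (e + 1) + 2 := by omega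
          have eB : m + 1 + e + 1 = m + (e + 1) + 1 := by omega
          rw [eB] at hB
          rw [eL, hA]
          have hsum : ∑ k ∈ Finset.range (m + 1), R k k * R (m + 1 - k + (e + 1)) (m + 1 - k)
              = (∑ k ∈ Finset.range (m + 1), R k k * R (m + 1 - k + e) (m + 1 - k))
              + (∑ k ∈ Finset.range (m + 1), R k k * R (m - k + (e + 2)) (m - k))
              + ∑ k ∈ Finset.range (m + 1), R k k * R (m - k + (e + 1)) (m - k) := by
            rw [← Finset.sum_add_distrib, ← Finset.sum_add_distrib]
            refine Finset.sum_congr rfl ?_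
            intro k hk
            simp only [Finset.mem_range] at hk
            have h2 : m + 1 - k + (e + 1) = m - k + e + 2 := by omega
            have h3 : m + 1 - k + e = m - k + e + 1 := by omega
            have h1 : m + 1 - k = m - k + 1 := by omega
            have h4 : m - k + (e + 2) = m - k + e + 2 := by omega
            have h5 : m - k + (e + 1) = m - k + e + 1 := by omega
            rw [h2, h3, h1, h4, h5, hrec' (m - k) e, mul_add, mul_add]
          rw [Finset.sum_range_succ, hsum]
          have h6 : m + 1 - (m + 1) = 0 := by omega
          have eC : m + (e + 1) + 2 = m + (e + 2) + 1 := by omega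
          rw [h6, hR0, eC, hC, hD, hB, Finset.sum_range_succ, h6, hR0]
          ring
  -- conclude
  intro n hn
  obtain ⟨m, rfl⟩ : ∃ m, n = m + 1 := ⟨n - 1, by omega⟩
  have h2 := key (2 * m) m 0 (by omega)
  simp only [Nat.add_zero] at h2
  have hsum : ∑ k ∈ Finset.range (m + 1), S k * S (m + 1 - 1 - k)
      = ∑ k ∈ Finset.range (m + 1), R k k * R (m - k) (m - k) := by
    refine Finset.sum_congr rfl ?_
    intro k hk
    have h1 : m + 1 - 1 - k = m - k := by omega
    rw [h1, hS k, hS (m - k)]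
  rw [hS (m + 1), hdiag' m, hsum, ← h2]
  have h3 : m + 1 - 1 = m := by omega
  rw [h3, hS m]
  ring
end
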